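/- Let R be a graded commutative 2-ring, S a homogeneous multiplicative system in R, and F : R → A an R-algebra (an additive symmetric monoidal functor to a preadditive symmetric monoidal category A with tensor product additive in each variable). Let S_A be the smallest class of morphisms of A containing F(S) and all isomorphisms of A and closed under composition and under tensoring with identity morphisms of objects of A, and let loc_R : R → S⁻¹R and loc_A : A → S_A⁻¹A be the localizations (which exist by the calculus of fractions). Let F̄ : S⁻¹R → S_A⁻¹A be the unique functor with F̄ ∘ loc_R = loc_A ∘ F. If F is full then F̄ is full, and if F is fully faithful then F̄ is fully faithful. -/

import Mathlib

open CategoryTheory CategoryTheory.Limits CategoryTheory.MonoidalCategory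

universe w v u v' u' v'' u''

/-- A *graded commutative 2-ring*: an essentially small preadditive symmetric monoidal
category whose tensor product is additive in each variable and in which every object
is invertible for the tensor product. -/
class GradedComm2Ring (C : Type u) [Category.{v} C] [Preadditive C] [MonoidalCategory C]
    [SymmetricCategory C] [MonoidalPreadditive C] : Prop where
  essentiallySmall : EssentiallySmall.{v} C
  invertible : ∀ g : C, ∃ g' : C, Nonempty (g ⊗ g' ≅ 𝟙_ C)
section TranslateDef

variable {C : Type u} [Category.{v} C] [MonoidalCategory C]

/-- `Translate r r'` says that `r'` is a *translate* of `r`: it is obtained from `r`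
by a finite sequence of the operations of tensoring with an identity morphism
(on either side) and of composing with an isomorphism (on either side). -/
inductive Translate : ∀ {g h g' h' : C}, (g ⟶ h) → (g' ⟶ h') → Prop
  | refl {g h : C} (r : g ⟶ h) : Translate r r
  | whiskerLeft {g h g' h' : C} {r : g ⟶ h} {r' : g' ⟶ h'} (ℓ : C) :
      Translate r r' → Translate r (ℓ ◁ r')
  | whiskerRight {g h g' h' : C} {r : g ⟶ h} {r' : g' ⟶ h'} (ℓ : C) :
      Translate r r' → Translate r (r' ▷ ℓ)
  | compIsoLeft {g h g' h' h'' : C} {r : g ⟶ h} {r' : g' ⟶ h'} (u : h' ≅ h'') :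
      Translate r r' → Translate r (r' ≫ u.hom)
  | compIsoRight {g h g' h' g'' : C} {r : g ⟶ h} {r' : g' ⟶ h'} (u : g'' ≅ g') :
      Translate r r' → Translate r (u.hom ≫ r')

end TranslateDef
section MulSysDef

variable {C : Type u} [Category.{v} C] [MonoidalCategory C]

/-- A *homogeneous multiplicative system*: a class of morphisms containing all
isomorphisms and closed under composition and under taking translates. -/
structure IsHomMulSystem (S : MorphismProperty C) : Prop where
  iso_mem : ∀ {g h : C} (f : g ⟶ h), IsIso f → S f
  comp_mem : ∀ {g h l : C} (f : g ⟶ h) (f' : h ⟶ l), S f → S f' → S (f ≫ f')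
  translate_mem : ∀ {g h g' h' : C} (f : g ⟶ h) (f' : g' ⟶ h'),
      S f → Translate f f' → S f'

end MulSysDef
section ExtDef

variable {C : Type u} [Category.{v} C] [MonoidalCategory C]
  {A : Type u'} [Category.{v'} A] [MonoidalCategory A]

/-- The smallest class of morphisms of `A` containing the image `F(S)`, containing all
isomorphisms of `A`, and closed under composition and under tensoring with identity
morphisms of objects of `A`. -/
inductive ExtMem (F : C ⥤ A) (S : MorphismProperty C) : ∀ {x y : A}, (x ⟶ y) → Prop
  | of {g h : C} (s : g ⟶ h) : S s → ExtMem F S (F.map s)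
  | iso {x y : A} (f : x ⟶ y) : IsIso f → ExtMem F S f
  | comp {x y z : A} (f : x ⟶ y) (g : y ⟶ z) :
      ExtMem F S f → ExtMem F S g → ExtMem F S (f ≫ g)
  | whiskerLeft {x y : A} (z : A) (f : x ⟶ y) : ExtMem F S f → ExtMem F S (z ◁ f)
  | whiskerRight {x y : A} (z : A) (f : x ⟶ y) : ExtMem F S f → ExtMem F S (f ▷ z)

/-- The extension `S_A` of a multiplicative system `S` of `C` along `F : C ⥤ A`. -/
def extSystem (F : C ⥤ A) (S : MorphismProperty C) : MorphismProperty A :=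
  fun _ _ f => ExtMem F S f

end ExtDef

universe v₃ u₃

/-!
Every object of `R` is invertible, so a morphism `s : g ⟶ h` of `S` is, up to an isomorphism of
`h`, the right multiplication `g ⟶ g ⊗ M`, `x ↦ x ⊗ m`, by the element `m : 𝟙 ⟶ g⁻¹ ⊗ h`
obtained by tensoring `s` with `g⁻¹`; being a translate of `s`, `m` lies in `S`. Right
multiplications by elements are stable under composition and whiskering (on the right thanks to
the symmetry), so every morphism of `S_A` is, up to an isomorphism of its target, right
multiplication by `F(m)` for an element `m` of `S`.

Multiplication by an element is natural, which gives the Ore condition for `S` and `S_A`. For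
cancellation, if `x ⊗ a` kills `g : x ⊗ V ⟶ B` with `V` invertible, then so does `B ⊗ a`:
transposing `g` across `V`, the symmetry exchanges left and right multiplication by `a`.

Consequently every `S_A`-morphism out of `F(x)` is `F(σ)` with `σ ∈ S` up to isomorphism. Hence
left fractions of `S_A` between objects `F(x)`, `F(y)` come from left fractions of `S` when `F`
is full, and `F(f)`, `F(g)` equalized by an `S_A`-morphism are equalized by the image of an
`S`-morphism, so `f`, `g` become equal in `S⁻¹R` when `F` is faithful.
-/

section Multiplication

variable {C : Type*} [Category C] [MonoidalCategory C]

def rightMul (X : C) {V : C} (a : 𝟙_ C ⟶ V) : X ⟶ X ⊗ V := (ρ_ X).inv ≫ X ◁ a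

def leftMul (X : C) {V : C} (a : 𝟙_ C ⟶ V) : X ⟶ V ⊗ X := (λ_ X).inv ≫ a ▷ X

variable {V : C} (a : 𝟙_ C ⟶ V)

lemma rightMul_naturality {X Y : C} (f : X ⟶ Y) : f ≫ rightMul Y a = rightMul X a ≫ f ▷ V := by
  simp [rightMul, whisker_exchange]

lemma leftMul_naturality {X Y : C} (f : X ⟶ Y) : f ≫ leftMul Y a = leftMul X a ≫ V ◁ f := by
  simp [leftMul, ← whisker_exchange]

lemma rightMul_tensor (X Y : C) :
    rightMul (X ⊗ Y) a = X ◁ rightMul Y a ≫ (α_ X Y V).inv := by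
  simp only [rightMul]; monoidal

lemma rightMul_comp_rightMul (X : C) {W : C} (b : 𝟙_ C ⟶ W) :
    rightMul X a ≫ rightMul (X ⊗ V) b ≫ (α_ X V W).hom = rightMul X (a ≫ rightMul V b) := by
  rw [rightMul_tensor]; simp [rightMul]

variable [BraidedCategory C]

lemma leftMul_comp_braiding (X : C) : leftMul X a ≫ (β_ V X).hom = rightMul X a := by
  simp only [leftMul, rightMul, Category.assoc, BraidedCategory.braiding_naturality_left,
    leftUnitor_inv_braiding_assoc]

lemma rightMul_whiskerRight (X Y : C) :
    rightMul X a ▷ Y ≫ (α_ X V Y).hom ≫ X ◁ (β_ V Y).hom ≫ (α_ X Y V).inv =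
      rightMul (X ⊗ Y) a := by
  have h : rightMul X a ▷ Y ≫ (α_ X V Y).hom = X ◁ leftMul Y a := by
    simp only [leftMul, rightMul]; monoidal
  rw [reassoc_of% h, rightMul_tensor, ← leftMul_comp_braiding, MonoidalCategory.whiskerLeft_comp,
    Category.assoc]

end Multiplication

/-- An `ExactPairing dual W` with invertible evaluation and coevaluation, of which only the
triangle identity for `W` is kept; in a braided category every invertible object has one
(`InvertibleLeftDual.ofIso`). -/
structure InvertibleLeftDual {C : Type*} [Category C] [MonoidalCategory C] (W : C) where
  dual : C
  ev : W ⊗ dual ≅ 𝟙_ C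
  coev : 𝟙_ C ≅ dual ⊗ W
  triangle : W ◁ coev.hom ≫ (α_ W dual W).inv ≫ ev.hom ▷ W = (ρ_ W).hom ≫ (λ_ W).inv

namespace InvertibleLeftDual

variable {C : Type*} [Category C] [MonoidalCategory C] {W : C} (D : InvertibleLeftDual W)

def absorb (B : C) : W ⊗ (D.dual ⊗ B) ≅ B :=
  (α_ W D.dual B).symm ≪≫ whiskerRightIso D.ev B ≪≫ λ_ B

lemma rightUnitor_inv_comp_whiskerLeft_coev :
    (ρ_ W).inv ≫ W ◁ D.coev.hom = (λ_ W).inv ≫ D.ev.inv ▷ W ≫ (α_ W D.dual W).hom := by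
  calc _ = (ρ_ W).inv ≫ (W ◁ D.coev.hom ≫ (α_ W D.dual W).inv ≫ D.ev.hom ▷ W) ≫
        D.ev.inv ▷ W ≫ (α_ W D.dual W).hom := by simp
    _ = _ := by rw [D.triangle]; simp

lemma comp_absorb_inv {V : C} (s : W ⟶ V) :
    s ≫ (D.absorb V).inv = rightMul W (D.coev.hom ≫ D.dual ◁ s) := by
  simp only [absorb, rightMul, Iso.trans_inv, whiskerRightIso_inv, Iso.symm_inv, Category.assoc,
    MonoidalCategory.whiskerLeft_comp, reassoc_of% D.rightUnitor_inv_comp_whiskerLeft_coev]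
  rw [leftUnitor_inv_naturality_assoc, whisker_exchange_assoc, associator_naturality_right]

lemma exists_whiskerLeft_comp_absorb {X B : C} (g : W ⊗ X ⟶ B) :
    ∃ h : X ⟶ D.dual ⊗ B, W ◁ h ≫ (D.absorb B).hom = g := by
  refine ⟨(λ_ X).inv ≫ D.coev.hom ▷ X ≫ (α_ D.dual W X).hom ≫ D.dual ◁ g, ?_⟩
  have zigzag : W ◁ (λ_ X).inv ≫ W ◁ (D.coev.hom ▷ X) ≫ W ◁ (α_ D.dual W X).hom ≫
      (α_ W D.dual (W ⊗ X)).inv ≫ D.ev.hom ▷ (W ⊗ X) ≫ (λ_ (W ⊗ X)).hom = 𝟙 _ := by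
    calc _ = ((ρ_ W).inv ≫ (W ◁ D.coev.hom ≫ (α_ W D.dual W).inv ≫ D.ev.hom ▷ W) ≫
          (λ_ W).hom) ▷ X := by monoidal
      _ = 𝟙 _ := by rw [D.triangle]; simp
  simp only [absorb, Iso.trans_hom, Iso.symm_hom, whiskerRightIso_hom,
    MonoidalCategory.whiskerLeft_comp, Category.assoc]
  rw [associator_inv_naturality_right_assoc, whisker_exchange_assoc, leftUnitor_naturality]
  simpa using zigzag =≫ g

variable [BraidedCategory C]

noncomputable def ofIso {W' : C} (ι : W ⊗ W' ≅ 𝟙_ C) : InvertibleLeftDual W := by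
  -- the coevaluation given by the braiding is corrected by the automorphism `z`
  let c : 𝟙_ C ≅ W' ⊗ W := ι.symm ≪≫ β_ W W'
  let z : W ≅ W := (ρ_ W).symm ≪≫ whiskerLeftIso W c ≪≫ (α_ W W' W).symm ≪≫
    whiskerRightIso ι W ≪≫ λ_ W
  refine ⟨W', ι, c ≪≫ whiskerLeftIso W' z.symm, ?_⟩
  rw [Iso.eq_comp_inv, ← cancel_epi (ρ_ W).inv, Iso.inv_hom_id]
  calc _ = (ρ_ W).inv ≫ W ◁ c.hom ≫ (W ◁ W' ◁ z.inv ≫ (α_ W W' W).inv) ≫ ι.hom ▷ W ≫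
        (λ_ W).hom := by simp
    _ = (ρ_ W).inv ≫ W ◁ c.hom ≫ (α_ W W' W).inv ≫ ((W ⊗ W') ◁ z.inv ≫ ι.hom ▷ W) ≫
        (λ_ W).hom := by rw [associator_inv_naturality_right]; simp
    _ = (ρ_ W).inv ≫ W ◁ c.hom ≫ (α_ W W' W).inv ≫ ι.hom ▷ W ≫ (𝟙_ C ◁ z.inv ≫ (λ_ W).hom) := by
        rw [whisker_exchange]; simp
    _ = z.hom ≫ z.inv := by rw [leftUnitor_naturality]; simp [z]
    _ = 𝟙 W := z.hom_inv_id

end InvertibleLeftDual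

theorem comp_rightMul_eq_zero {C : Type*} [Category C] [Preadditive C] [MonoidalCategory C]
    [MonoidalPreadditive C] [BraidedCategory C] {V X B : C} (D : InvertibleLeftDual V)
    (a : 𝟙_ C ⟶ V) (g : X ⊗ V ⟶ B) (hg : rightMul X a ≫ g = 0) : g ≫ rightMul B a = 0 := by
  obtain ⟨h, hh⟩ := D.exists_whiskerLeft_comp_absorb ((β_ V X).hom ≫ g)
  have h_left : h ≫ leftMul _ a = 0 := by
    have : (leftMul X a ≫ V ◁ h) ≫ (D.absorb B).hom = 0 := by
      rw [Category.assoc, hh, reassoc_of% leftMul_comp_braiding, hg]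
    rw [leftMul_naturality]
    simpa using this =≫ (D.absorb B).inv
  have h_right : h ≫ rightMul _ a = 0 := by
    rw [← leftMul_comp_braiding, reassoc_of% h_left, zero_comp]
  calc g ≫ rightMul B a = (β_ V X).inv ≫ V ◁ h ≫ (D.absorb B).hom ≫ rightMul B a := by
        rw [reassoc_of% hh, Iso.inv_hom_id_assoc]
    _ = (β_ V X).inv ≫ V ◁ (h ≫ rightMul _ a) ≫ (α_ _ _ _).inv ≫ (D.absorb B).hom ▷ V := by
        rw [rightMul_naturality, rightMul_tensor]; simp
    _ = 0 := by rw [h_right]; simp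

theorem MorphismProperty.hasLeftCalculusOfFractions_of_rightMul {C : Type*} [Category C]
    [Preadditive C] [MonoidalCategory C] [MonoidalPreadditive C] [BraidedCategory C]
    (W : MorphismProperty C) [W.IsMultiplicative]
    (hW : ∀ ⦃x y : C⦄ (s : x ⟶ y), W s → ∃ (V : C) (a : 𝟙_ C ⟶ V) (i : y ≅ x ⊗ V),
      Nonempty (InvertibleLeftDual V) ∧ (∀ X, W (rightMul X a)) ∧ s ≫ i.hom = rightMul x a) :
    W.HasLeftCalculusOfFractions where
  exists_leftFraction X Y φ := by
    obtain ⟨V, a, i, -, ha, hs⟩ := hW φ.s φ.hs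
    refine ⟨MorphismProperty.LeftFraction.mk (i.hom ≫ φ.f ▷ V) (rightMul Y a) (ha Y), ?_⟩
    simp [reassoc_of% hs, rightMul_naturality]
  ext X' X Y f₁ f₂ s hs h := by
    obtain ⟨V, a, i, ⟨D⟩, ha, hsa⟩ := hW s hs
    refine ⟨_, rightMul Y a, ha Y, ?_⟩
    rw [← sub_eq_zero, ← Preadditive.sub_comp]
    have := comp_rightMul_eq_zero D a (i.inv ≫ (f₁ - f₂)) (by
      rw [← hsa, Category.assoc, i.hom_inv_id_assoc, Preadditive.comp_sub, h, sub_self])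
    simpa using i.hom ≫= this

namespace IsHomMulSystem

variable {C : Type*} [Category C] [MonoidalCategory C] {S : MorphismProperty C}
  (hS : IsHomMulSystem S)
include hS

lemma isMultiplicative : S.IsMultiplicative where
  id_mem _ := hS.iso_mem _ inferInstance
  comp_mem f g := hS.comp_mem f g

lemma rightMul_mem {M : C} {m : 𝟙_ C ⟶ M} (hm : S m) (X : C) : S (rightMul X m) :=
  hS.translate_mem m _ hm (.compIsoRight (ρ_ X).symm (.whiskerLeft X (.refl m)))

lemma exists_rightMul [BraidedCategory C] (hC : ∀ g : C, ∃ g' : C, Nonempty (g ⊗ g' ≅ 𝟙_ C))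
    {g h : C} {s : g ⟶ h} (hs : S s) :
    ∃ (M : C) (m : 𝟙_ C ⟶ M) (i : h ≅ g ⊗ M), S m ∧ s ≫ i.hom = rightMul g m := by
  obtain ⟨g', ⟨ι⟩⟩ := hC g
  let D := InvertibleLeftDual.ofIso ι
  exact ⟨_, D.coev.hom ≫ D.dual ◁ s, (D.absorb h).symm,
    hS.translate_mem s _ hs (.compIsoRight D.coev (.whiskerLeft D.dual (.refl s))),
    D.comp_absorb_inv s⟩

theorem hasLeftCalculusOfFractions [Preadditive C] [MonoidalPreadditive C] [BraidedCategory C]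
    (hC : ∀ g : C, ∃ g' : C, Nonempty (g ⊗ g' ≅ 𝟙_ C)) : S.HasLeftCalculusOfFractions :=
  have := hS.isMultiplicative
  MorphismProperty.hasLeftCalculusOfFractions_of_rightMul S fun _ _ _ hs => by
    obtain ⟨M, m, i, hm, hs⟩ := hS.exists_rightMul hC hs
    obtain ⟨M', ⟨ι⟩⟩ := hC M
    exact ⟨M, m, i, ⟨.ofIso ι⟩, hS.rightMul_mem hm, hs⟩

end IsHomMulSystem

open Functor.LaxMonoidal

section Extension

variable {C : Type*} [Category C] [MonoidalCategory C] {A : Type*} [Category A]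
  [MonoidalCategory A] (F : C ⥤ A) [F.Monoidal] (S : MorphismProperty C)

lemma Functor.map_rightMul (X : C) {M : C} (m : 𝟙_ C ⟶ M) :
    F.map (rightMul X m) = rightMul (F.obj X) (ε F ≫ F.map m) ≫ μ F X M := by
  rw [rightMul, F.map_comp, Functor.Monoidal.map_rightUnitor_inv, Category.assoc,
    Category.assoc, ← μ_natural_right]
  simp [rightMul]

lemma extMem_rightMul {M : C} {m : 𝟙_ C ⟶ M} (hm : S m) (X : A) :
    ExtMem F S (rightMul X (ε F ≫ F.map m)) :=
  .comp _ _ (.iso _ inferInstance) (.whiskerLeft X _ (.comp _ _ (.iso _ inferInstance) (.of m hm)))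

instance : (extSystem F S).IsMultiplicative where
  id_mem _ := ExtMem.iso _ inferInstance
  comp_mem f g := ExtMem.comp f g

def IsRightMulByElem {x y : A} (t : x ⟶ y) : Prop :=
  ∃ (M : C) (m : 𝟙_ C ⟶ M) (i : y ≅ x ⊗ F.obj M), S m ∧ t ≫ i.hom = rightMul x (ε F ≫ F.map m)

variable {F S}

lemma isRightMulByElem_map [BraidedCategory C] (hS : IsHomMulSystem S)
    (hC : ∀ g : C, ∃ g' : C, Nonempty (g ⊗ g' ≅ 𝟙_ C)) {g h : C} {s : g ⟶ h} (hs : S s) :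
    IsRightMulByElem F S (F.map s) := by
  obtain ⟨M, m, i, hm, hsm⟩ := hS.exists_rightMul hC hs
  refine ⟨M, m, F.mapIso i ≪≫ (Functor.Monoidal.μIso F g M).symm, hm, ?_⟩
  simp [← F.map_comp_assoc, hsm, Functor.map_rightMul]

lemma isRightMulByElem_of_isIso (hS : IsHomMulSystem S) {x y : A} (f : x ⟶ y) [IsIso f] :
    IsRightMulByElem F S f :=
  ⟨𝟙_ C, 𝟙 _, (asIso f).symm ≪≫ (ρ_ x).symm ≪≫ whiskerLeftIso x (Functor.Monoidal.εIso F),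
    hS.iso_mem _ inferInstance, by simp [rightMul]⟩

lemma IsRightMulByElem.comp (hS : IsHomMulSystem S) {x y z : A} {t₁ : x ⟶ y} {t₂ : y ⟶ z}
    (h₁ : IsRightMulByElem F S t₁) (h₂ : IsRightMulByElem F S t₂) :
    IsRightMulByElem F S (t₁ ≫ t₂) := by
  obtain ⟨M₁, m₁, i₁, hm₁, e₁⟩ := h₁
  obtain ⟨M₂, m₂, i₂, hm₂, e₂⟩ := h₂
  refine ⟨M₁ ⊗ M₂, m₁ ≫ rightMul M₁ m₂, i₂ ≪≫ whiskerRightIso i₁ _ ≪≫ α_ _ _ _ ≪≫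
    whiskerLeftIso x (Functor.Monoidal.μIso F M₁ M₂),
    hS.comp_mem _ _ hm₁ (hS.rightMul_mem hm₂ M₁), ?_⟩
  calc (t₁ ≫ t₂) ≫ _
      = t₁ ≫ rightMul y (ε F ≫ F.map m₂) ≫ i₁.hom ▷ _ ≫ (α_ _ _ _).hom ≫ x ◁ μ F M₁ M₂ := by
        simp [reassoc_of% e₂]
    _ = rightMul x (ε F ≫ F.map m₁) ≫ rightMul (x ⊗ F.obj M₁) (ε F ≫ F.map m₂) ≫
          (α_ _ _ _).hom ≫ x ◁ μ F M₁ M₂ := by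
        rw [← reassoc_of% rightMul_naturality, reassoc_of% e₁]
    _ = rightMul x (ε F ≫ F.map (m₁ ≫ rightMul M₁ m₂)) := by
        rw [reassoc_of% rightMul_comp_rightMul]
        simp [rightMul]

lemma IsRightMulByElem.whiskerLeft {x y : A} {t : x ⟶ y} (h : IsRightMulByElem F S t) (w : A) :
    IsRightMulByElem F S (w ◁ t) := by
  obtain ⟨M, m, i, hm, e⟩ := h
  refine ⟨M, m, whiskerLeftIso w i ≪≫ (α_ _ _ _).symm, hm, ?_⟩
  simp [rightMul_tensor, ← MonoidalCategory.whiskerLeft_comp_assoc, e]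

lemma IsRightMulByElem.whiskerRight [BraidedCategory A] {x y : A} {t : x ⟶ y}
    (h : IsRightMulByElem F S t) (w : A) : IsRightMulByElem F S (t ▷ w) := by
  obtain ⟨M, m, i, hm, e⟩ := h
  refine ⟨M, m, whiskerRightIso i w ≪≫ α_ _ _ _ ≪≫ whiskerLeftIso x (β_ _ w) ≪≫ (α_ _ _ _).symm,
    hm, ?_⟩
  simp [← comp_whiskerRight_assoc, e, ← rightMul_whiskerRight]

variable [BraidedCategory C] [BraidedCategory A] (hS : IsHomMulSystem S)
  (hC : ∀ g : C, ∃ g' : C, Nonempty (g ⊗ g' ≅ 𝟙_ C))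
include hS hC

theorem ExtMem.isRightMulByElem {x y : A} {t : x ⟶ y} (ht : ExtMem F S t) :
    IsRightMulByElem F S t := by
  induction ht with
  | of s hs => exact isRightMulByElem_map hS hC hs
  | iso f _ => exact isRightMulByElem_of_isIso hS f
  | comp _ _ _ _ h₁ h₂ => exact h₁.comp hS h₂
  | whiskerLeft w _ _ h => exact h.whiskerLeft w
  | whiskerRight w _ _ h => exact h.whiskerRight w

theorem hasLeftCalculusOfFractions_extSystem [Preadditive A] [MonoidalPreadditive A] :
    (extSystem F S).HasLeftCalculusOfFractions :=
  MorphismProperty.hasLeftCalculusOfFractions_of_rightMul _ fun _ _ _ ht => by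
    obtain ⟨M, m, i, hm, e⟩ := ExtMem.isRightMulByElem hS hC ht
    obtain ⟨M', ⟨ι⟩⟩ := hC M
    exact ⟨_, _, i, ⟨.ofIso (Functor.Monoidal.μIso F M M' ≪≫ F.mapIso ι ≪≫
      (Functor.Monoidal.εIso F).symm)⟩, extMem_rightMul F S hm, e⟩

theorem ExtMem.exists_map_comp_iso {x : C} {Y : A} {t : F.obj x ⟶ Y} (ht : ExtMem F S t) :
    ∃ (y : C) (σ : x ⟶ y) (j : F.obj y ≅ Y), S σ ∧ F.map σ ≫ j.hom = t := by
  obtain ⟨M, m, i, hm, e⟩ := ExtMem.isRightMulByElem hS hC ht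
  refine ⟨x ⊗ M, rightMul x m, (Functor.Monoidal.μIso F x M).symm ≪≫ i.symm,
    hS.rightMul_mem hm x, ?_⟩
  simp [Functor.map_rightMul, ← e]

end Extension

section LocalizedFunctor

variable {C A D B : Type*} [Category C] [Category A] [Category D] [Category B]
  {W₁ : MorphismProperty C} {W₂ : MorphismProperty A} {F : C ⥤ A}
  (L₁ : C ⥤ D) [L₁.IsLocalization W₁] (L₂ : A ⥤ B) [L₂.IsLocalization W₂]
  {G : D ⥤ B} (e : L₁ ⋙ G ≅ F ⋙ L₂)
  (hlift : ∀ ⦃x : C⦄ ⦃Y : A⦄ (t : F.obj x ⟶ Y), W₂ t →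
    ∃ (y : C) (σ : x ⟶ y) (j : F.obj y ≅ Y), W₁ σ ∧ F.map σ ≫ j.hom = t)
include e hlift

theorem Functor.full_of_isLocalization [W₂.HasLeftCalculusOfFractions] [F.Full] : G.Full := by
  have := Localization.essSurj L₁ W₁
  refine G.full_of_comp_essSurj L₁ fun x y φ => ?_
  obtain ⟨ψ, hψ⟩ := Localization.exists_leftFraction L₂ W₂ (e.inv.app x ≫ φ ≫ e.hom.app y)
  obtain ⟨y', σ, j, hσ, hσj⟩ := hlift ψ.s ψ.hs
  have := Localization.inverts L₁ W₁ σ hσ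
  have hf : L₂.map ψ.f = (e.inv.app x ≫ φ ≫ e.hom.app y) ≫ L₂.map ψ.s := by
    rw [hψ, ψ.map_comp_map_s]
  have hs : F.map σ = ψ.s ≫ j.inv := by simp [← hσj]
  refine ⟨L₁.map (F.preimage (ψ.f ≫ j.inv)) ≫ inv (L₁.map σ), ?_⟩
  have nat {a b : C} (f : a ⟶ b) :
      G.map (L₁.map f) = e.hom.app a ≫ L₂.map (F.map f) ≫ e.inv.app b :=
    (NatIso.naturality_2 e f).symm
  rw [G.map_comp, G.map_inv, IsIso.comp_inv_eq, nat, nat, F.map_preimage, hs, L₂.map_comp,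
    L₂.map_comp, hf]
  simp

theorem Functor.faithful_of_isLocalization [W₁.HasLeftCalculusOfFractions]
    [W₂.HasLeftCalculusOfFractions] [F.Faithful] : G.Faithful := by
  refine Functor.faithful_of_comp_of_hasLeftCalculusOfFractions L₁ W₁ G fun x y f g hfg => ?_
  have : L₂.map (F.map f) = L₂.map (F.map g) := by
    have nat (f : x ⟶ y) : L₂.map (F.map f) = e.inv.app x ≫ G.map (L₁.map f) ≫ e.hom.app y :=
      (NatIso.naturality_1 e f).symm
    rw [nat, nat, hfg]
  obtain ⟨Z, t, ht, hft⟩ := (MorphismProperty.map_eq_iff_postcomp L₂ W₂ _ _).1 this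
  obtain ⟨y', σ, j, hσ, rfl⟩ := hlift t ht
  have : f ≫ σ = g ≫ σ := F.map_injective (by simpa using hft =≫ j.inv)
  exact (MorphismProperty.map_eq_iff_postcomp L₁ W₁ f g).2 ⟨y', σ, hσ, this⟩

end LocalizedFunctor

theorem localized_functor_full_faithful_general
    {C : Type u} [Category.{v} C] [Preadditive C] [MonoidalCategory C]
    [SymmetricCategory C] [MonoidalPreadditive C] [GradedComm2Ring C]
    {A : Type u'} [Category.{v'} A] [Preadditive A] [MonoidalCategory A]
    [SymmetricCategory A] [MonoidalPreadditive A]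
    (S : MorphismProperty C) (hS : IsHomMulSystem S)
    (F : C ⥤ A) [F.Monoidal]
    {D : Type u''} [Category.{v''} D] {B : Type u₃} [Category.{v₃} B]
    (locR : C ⥤ D) [locR.IsLocalization S]
    (locA : A ⥤ B) [locA.IsLocalization (extSystem F S)]
    (Fbar : D ⥤ B) (hFbar : locR ⋙ Fbar = F ⋙ locA) :
    (F.Full → Fbar.Full) ∧ (F.Full → F.Faithful → Fbar.Full ∧ Fbar.Faithful) := by
  have hC := GradedComm2Ring.invertible (C := C)
  have := hS.hasLeftCalculusOfFractions hC
  have := hasLeftCalculusOfFractions_extSystem (F := F) hS hC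
  have e : locR ⋙ Fbar ≅ F ⋙ locA := eqToIso hFbar
  have hlift := fun (x : C) (Y : A) (t : F.obj x ⟶ Y) (ht : extSystem F S t) =>
    ExtMem.exists_map_comp_iso hS hC ht
  have full (_ : F.Full) : Fbar.Full := Functor.full_of_isLocalization locR locA e hlift
  exact ⟨full, fun hF _ => ⟨full hF, Functor.faithful_of_isLocalization locR locA e hlift⟩⟩

/-- **Statement 18.** Let `R` be a graded commutative 2-ring, `S` a homogeneous
multiplicative system in `R`, and `F : R ⥤ A` an `R`-algebra.  Let
`loc_R : R ⥤ S⁻¹R` and `loc_A : A ⥤ S_A⁻¹A` be the localizations, and let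
`F̄ : S⁻¹R ⥤ S_A⁻¹A` be the (unique) functor with `F̄ ∘ loc_R = loc_A ∘ F`.
If `F` is full then `F̄` is full, and if `F` is fully faithful then `F̄` is fully
faithful. -/
theorem localized_functor_full_faithful
    {C : Type u} [Category.{v} C] [Preadditive C] [MonoidalCategory C]
    [SymmetricCategory C] [MonoidalPreadditive C] [GradedComm2Ring C]
    {A : Type u'} [Category.{v'} A] [Preadditive A] [MonoidalCategory A]
    [SymmetricCategory A] [MonoidalPreadditive A]
    (S : MorphismProperty C) (hS : IsHomMulSystem S)
    (F : C ⥤ A) [F.Additive] [F.Monoidal] [F.Braided]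
    {D : Type u''} [Category.{v''} D] {B : Type u₃} [Category.{v₃} B]
    (locR : C ⥤ D) [locR.IsLocalization S]
    (locA : A ⥤ B) [locA.IsLocalization (extSystem F S)]
    (Fbar : D ⥤ B) (hFbar : locR ⋙ Fbar = F ⋙ locA) :
    (F.Full → Fbar.Full) ∧ (F.Full → F.Faithful → Fbar.Full ∧ Fbar.Faithful) :=
  localized_functor_full_faithful_general S hS F locR locA Fbar hFbar
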